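/- arXiv:1006.5390 — 2 statements merged into one kernel-verified Lean document; each statement's English description precedes it below -/
import Mathlib

section
/- Let k be a field of characteristic zero and B a finite-dimensional commutative k-algebra. If for one field extension k → k' the algebra B ⊗_k k' admits a direct product decomposition B ⊗_k k' ≅ K × S with K a field extension of k', then for every field extension k → k'' the algebra B ⊗_k k'' admits such a decomposition with a field factor. -/
universe u v w x

open scoped TensorProduct

/-- A commutative algebra `C` over a field `k'` has a field direct summand if it
decomposes as a product `C ≅ K × S` of `k'`-algebras with `K` a field extension of `k'`. -/
def HasFieldSummand (k' : Type u) [Field k'] (C : Type v) [CommRing C] [Algebra k' C] :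
    Prop :=
  ∃ (K : Type v) (S : Type v) (_ : Field K) (_ : Algebra k' K) (_ : CommRing S)
    (_ : Algebra k' S), Nonempty (C ≃ₐ[k'] K × S)

/-!
Descent. Let `ψ : k' ⊗ B ≃ K × S`, let `p` be the kernel of `B → K` (a maximal ideal, `B` being
artinian) and `e = ψ⁻¹ (1, 0)`. Then `e` kills `1 ⊗ p` but does not lie in `k' ⊗ p`. If some
`x ∈ p` were not in `p²`, then `p` would be exactly the kernel of `b ↦ b x mod p²`; this stays true
after the flat base change to `k'`, and since `e (1 ⊗ x) = 0` it would put `e` into `k' ⊗ p`.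
So `p = p²`, hence `p` is generated by an idempotent and `B ≃ B ⧸ p × S'` with `B ⧸ p` a field.

Ascent. If `B ≃ K × S` then `k'' ⊗ B ≃ (k'' ⊗ K) × (k'' ⊗ S)`. Over a perfect field `K` is
separable, so `k'' ⊗ K` is unramified over `k''`, hence reduced, and a reduced artinian ring is
semisimple: any of its maximal ideals is generated by an idempotent, and splits off a field.
-/

open Algebra.TensorProduct

def AlgEquiv.prodAssoc (R A B C : Type*) [CommSemiring R] [Semiring A] [Semiring B]
    [Semiring C] [Algebra R A] [Algebra R B] [Algebra R C] :
    ((A × B) × C) ≃ₐ[R] (A × (B × C)) :=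
  { Equiv.prodAssoc A B C with
    map_mul' := fun _ _ => rfl
    map_add' := fun _ _ => rfl
    commutes' := fun _ => rfl }

namespace HasFieldSummand

variable {k' : Type u} [Field k'] {C : Type v} [CommRing C] [Algebra k' C]

theorem of_algEquiv {D : Type v} [CommRing D] [Algebra k' D] (h : HasFieldSummand k' C)
    (e : C ≃ₐ[k'] D) : HasFieldSummand k' D := by
  obtain ⟨K, S, _, _, _, _, ⟨ψ⟩⟩ := h
  exact ⟨K, S, _, _, _, _, ⟨e.symm.trans ψ⟩⟩

theorem prod (h : HasFieldSummand k' C) (D : Type v) [CommRing D] [Algebra k' D] :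
    HasFieldSummand k' (C × D) := by
  obtain ⟨K, S, _, _, _, _, ⟨ψ⟩⟩ := h
  exact ⟨K, S × D, _, _, _, _,
    ⟨(AlgEquiv.prodCongr ψ AlgEquiv.refl).trans (AlgEquiv.prodAssoc k' K S D)⟩⟩

theorem of_isIdempotentElem_of_isMaximal_span {e : C} (he : IsIdempotentElem e)
    [(Ideal.span {e}).IsMaximal] : HasFieldSummand k' C :=
  letI := Ideal.Quotient.field (Ideal.span {e})
  ⟨_, _, _, _, _, _, ⟨AlgEquiv.prodQuotientOfIsIdempotentElem k' he he.one_sub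
    (add_sub_cancel e 1) he.mul_one_sub_self⟩⟩

theorem of_isIdempotentElem_of_isMaximal (p : Ideal C) [p.IsMaximal] (hp : IsIdempotentElem p)
    (hfg : p.FG) : HasFieldSummand k' C := by
  obtain ⟨e, he, rfl⟩ := (Ideal.isIdempotentElem_iff_of_fg p hfg).mp hp
  exact of_isIdempotentElem_of_isMaximal_span he

theorem of_isArtinianRing_of_isReduced [IsArtinianRing C] [IsReduced C] [Nontrivial C] :
    HasFieldSummand k' C := by
  have := IsArtinianRing.isSemisimpleRing_of_isReduced C
  obtain ⟨m, hm⟩ := Ideal.exists_maximal C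
  obtain ⟨e, he, rfl⟩ := IsSemisimpleRing.ideal_eq_span_idempotent m
  exact of_isIdempotentElem_of_isMaximal_span he

end HasFieldSummand

section FlatBaseChange

variable {R A B : Type*} [CommRing R] [CommRing A] [Algebra R A] [CommRing B] [Algebra R B]

theorem LinearMap.lTensor_mulRight_apply (x : B) (c : A ⊗[R] B) :
    LinearMap.lTensor A (LinearMap.mulRight R x) c = c * (1 ⊗ₜ x) := by
  induction c using TensorProduct.induction_on with
  | zero => simp
  | tmul a b => simp
  | add c d hc hd => rw [map_add, hc, hd, add_mul]

theorem Ideal.ker_mkₐ_sq_comp_mulRight {p : Ideal B} [hp : p.IsMaximal] {x : B} (hxp : x ∈ p)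
    (hx : x ∉ p ^ 2) :
    LinearMap.ker ((Ideal.Quotient.mkₐ R (p ^ 2)).toLinearMap ∘ₗ LinearMap.mulRight R x) =
      p.restrictScalars R := by
  ext b
  simp only [LinearMap.mem_ker, LinearMap.comp_apply, LinearMap.mulRight_apply,
    AlgHom.toLinearMap_apply, Ideal.Quotient.mkₐ_eq_mk, Ideal.Quotient.eq_zero_iff_mem,
    Submodule.restrictScalars_mem]
  refine ⟨fun hbx => by_contra fun hb => hx ?_, fun hb => pow_two p ▸ Ideal.mul_mem_mul hb hxp⟩
  obtain ⟨c, i, hi, hcb⟩ := hp.exists_inv hb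
  have hx' : x = c * (b * x) + i * x := by linear_combination (-x) * hcb
  rw [hx', pow_two]
  exact add_mem (Ideal.mul_mem_left _ c (pow_two p ▸ hbx)) (Ideal.mul_mem_mul hi hxp)

variable [Module.Flat R A]

theorem Ideal.mem_map_includeRight_of_mul_tmul_eq_zero {p : Ideal B} [p.IsMaximal] {x : B}
    (hxp : x ∈ p) (hx : x ∉ p ^ 2) {c : A ⊗[R] B} (hc : c * (1 ⊗ₜ x) = 0) :
    c ∈ p.map (includeRight : B →ₐ[R] A ⊗[R] B) := by
  have hexact := Module.Flat.lTensor_exact A (LinearMap.exact_iff.mpr <| by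
    rw [Ideal.ker_mkₐ_sq_comp_mulRight (R := R) hxp hx, Submodule.range_subtype])
  obtain ⟨t, rfl⟩ := (hexact c).mp <| by
    rw [LinearMap.lTensor_comp, LinearMap.comp_apply, LinearMap.lTensor_mulRight_apply, hc,
      map_zero]
  rw [← Submodule.restrictScalars_mem R, Ideal.map_includeRight_eq]
  exact ⟨t, rfl⟩

theorem Ideal.isIdempotentElem_of_mul_tmul_eq_zero {p : Ideal B} [p.IsMaximal] {e : A ⊗[R] B}
    (he : ∀ x ∈ p, e * (1 ⊗ₜ x) = 0) (hep : e ∉ p.map (includeRight : B →ₐ[R] A ⊗[R] B)) :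
    IsIdempotentElem p :=
  le_antisymm Ideal.mul_le_left fun x hxp => by_contra fun hx =>
    hep (Ideal.mem_map_includeRight_of_mul_tmul_eq_zero hxp (by rwa [pow_two]) (he x hxp))

end FlatBaseChange

namespace HasFieldSummand

variable {k : Type*} [Field k] {B : Type*} [CommRing B] [Algebra k B] [Module.Finite k B]

theorem of_baseChange {k' : Type*} [Field k'] [Algebra k k']
    (h : HasFieldSummand k' (k' ⊗[k] B)) : HasFieldSummand k B := by
  obtain ⟨K, S, _, _, _, _, ⟨ψ⟩⟩ := h
  let f : k' ⊗[k] B →+* K := (RingHom.fst K S).comp ψ.toRingHom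
  let p : Ideal B := (RingHom.ker f).comap (includeRight : B →ₐ[k] k' ⊗[k] B)
  have : IsArtinianRing B := isArtinian_of_tower k inferInstance
  have : IsNoetherianRing B := isNoetherian_of_tower k inferInstance
  have : p.IsPrime := (RingHom.ker_isPrime f).comap _
  have hp : IsIdempotentElem p := by
    refine Ideal.isIdempotentElem_of_mul_tmul_eq_zero (e := ψ.symm (1, 0)) (fun x hx => ?_) ?_
    · apply ψ.injective
      ext
      · simpa [p, f] using hx
      · simp
    · refine fun hmem => one_ne_zero (α := K) ?_
      simpa [f] using Ideal.map_comap_le hmem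
  exact of_isIdempotentElem_of_isMaximal p hp (IsNoetherian.noetherian p)

theorem baseChange [PerfectField k] (h : HasFieldSummand k B) (k'' : Type*) [Field k'']
    [Algebra k k''] : HasFieldSummand k'' (k'' ⊗[k] B) := by
  obtain ⟨K, S, _, _, _, _, ⟨ψ⟩⟩ := h
  have : Module.Finite k K := .of_surjective ((AlgHom.fst k K S).comp ψ.toAlgHom).toLinearMap
    (Prod.fst_surjective.comp ψ.surjective)
  have : Algebra.FormallyUnramified k K := .of_isSeparable k K
  have := Algebra.FormallyUnramified.isReduced_of_field k'' (k'' ⊗[k] K)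
  have : IsArtinianRing (k'' ⊗[k] K) := isArtinian_of_tower k'' inferInstance
  exact (of_isArtinianRing_of_isReduced.prod _).of_algEquiv
    ((Algebra.TensorProduct.congr .refl ψ).trans
      (Algebra.TensorProduct.prodRight k k'' k'' K S)).symm

end HasFieldSummand

/-- In characteristic zero, having a field direct summand is invariant under arbitrary
field extension of the base: if `B ⊗_k k'` has a field direct summand for one field
extension `k → k'`, then `B ⊗_k k''` has one for every field extension `k → k''`. -/
theorem hasFieldSummand_of_exists_fieldExtension
    (k : Type u) [Field k] [CharZero k]
    (B : Type v) [CommRing B] [Algebra k B] [FiniteDimensional k B]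
    (h : ∃ (k' : Type w) (_ : Field k') (_ : Algebra k k'),
      HasFieldSummand k' (k' ⊗[k] B)) :
    ∀ (k'' : Type x) [Field k''] [Algebra k k''],
      HasFieldSummand k'' (k'' ⊗[k] B) := by
  obtain ⟨k', _, _, h'⟩ := h
  intro k'' _ _
  exact h'.of_baseChange.baseChange k''
end

section
/- Let C be a commutative ring, q ⊆ C a maximal ideal, and I ⊆ C an ideal, and assume Spec C decomposes as the disjoint union of the single closed point {q} and the closed set V(I). Then there exist idempotents e₁ ∈ q and e₂ ∈ I with e₁ + e₂ = 1 and e₁e₂ = 0, inducing a direct product decomposition C ≅ e₁C × e₂C, and e₂C is isomorphic to the localization C_q. -/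
/-- If `q` is a maximal ideal of a commutative ring `C` and `Spec C` is the disjoint
union of the single closed point `{q}` and the closed set `V(I)`, then there are
idempotents `e₁ ∈ q`, `e₂ ∈ I` with `e₁ + e₂ = 1` and `e₁e₂ = 0`, inducing a direct
product decomposition `C ≅ e₁C × e₂C` (realized as `C/(e₂) × C/(e₁)`), with
`e₂C ≅ C/(e₁)` isomorphic to the localization `C_q`. -/
theorem isolated_maximal_point_gives_idempotent_splitting
    {C : Type*} [CommRing C] (q : Ideal C) (hq : q.IsMaximal) (I : Ideal C)
    (hcover : ∀ p : PrimeSpectrum C, p.asIdeal = q ∨ I ≤ p.asIdeal)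
    (hdisj : ¬ I ≤ q) :
    ∃ e₁ e₂ : C, IsIdempotentElem e₁ ∧ IsIdempotentElem e₂ ∧
      e₁ ∈ q ∧ e₂ ∈ I ∧ e₁ + e₂ = 1 ∧ e₁ * e₂ = 0 ∧
      Nonempty (C ≃+* (C ⧸ Ideal.span {e₂}) × (C ⧸ Ideal.span {e₁})) ∧
      Nonempty ((C ⧸ Ideal.span {e₁}) ≃+* Localization.AtPrime q) := by
  -- q ⊔ I = ⊤
  have hsup : q ⊔ I = ⊤ := by
    rcases hq with ⟨hne, hmax⟩
    exact hmax _ (lt_of_le_of_ne le_sup_left (fun h => hdisj (h ▸ le_sup_right)))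
  obtain ⟨a, ha, b, hb, hab⟩ := Submodule.mem_sup.mp (hsup ▸ Submodule.mem_top (x := (1 : C)))
  -- a*b is nilpotent
  have hnil : IsNilpotent (a * b) := by
    rw [← mem_nilradical, nilradical_eq_sInf, Ideal.mem_sInf]
    intro p hp
    rcases hcover ⟨p, hp⟩ with h | h
    · exact p.mul_mem_right b (by rw [show p = q from h]; exact ha)
    · exact p.mul_mem_left a (h hb)
  obtain ⟨n, hn⟩ := hnil
  have hcop : IsCoprime a b := ⟨1, 1, by rw [one_mul, one_mul, hab]⟩
  obtain ⟨u, v, huv⟩ := (hcop.pow (m := n + 1) (n := n + 1))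
  set e₁ := u * a ^ (n + 1) with he₁def
  set e₂ := v * b ^ (n + 1) with he₂def
  have hsum : e₁ + e₂ = 1 := huv
  have hprod : e₁ * e₂ = 0 := by
    have : (a * b) ^ (n + 1) = 0 := by rw [pow_succ, hn, zero_mul]
    calc e₁ * e₂ = u * v * (a * b) ^ (n + 1) := by rw [mul_pow]; ring
    _ = 0 := by rw [this, mul_zero]
  have hid₁ : IsIdempotentElem e₁ := by
    have : e₁ * (e₁ + e₂) = e₁ * 1 := by rw [hsum]
    unfold IsIdempotentElem
    rw [mul_add, hprod, add_zero, mul_one] at this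
    exact this
  have hid₂ : IsIdempotentElem e₂ := by
    have : (e₁ + e₂) * e₂ = 1 * e₂ := by rw [hsum]
    unfold IsIdempotentElem
    rw [add_mul, hprod, zero_add, one_mul] at this
    exact this
  have he₁q : e₁ ∈ q := q.mul_mem_left u (q.pow_mem_of_mem ha (n + 1) (Nat.succ_pos n))
  have he₂I : e₂ ∈ I := I.mul_mem_left v (I.pow_mem_of_mem hb (n + 1) (Nat.succ_pos n))
  have he₂q : e₂ ∉ q := fun h => hq.ne_top (Ideal.eq_top_of_isUnit_mem q
    (hsum ▸ q.add_mem he₁q h) isUnit_one)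
  -- the only prime containing e₁ is q
  have hkey : ∀ (p : Ideal C), p.IsPrime → e₁ ∈ p → p = q := by
    intro p hp hmem
    rcases hcover ⟨p, hp⟩ with h | h
    · exact h
    · exact absurd (hsum ▸ p.add_mem hmem (h he₂I)) (by simpa using hp.ne_top ∘ (Ideal.eq_top_iff_one p).mpr)
  refine ⟨e₁, e₂, hid₁, hid₂, he₁q, he₂I, hsum, hprod, ?_, ?_⟩
  · -- product decomposition
    have hcopI : IsCoprime (Ideal.span {e₂}) (Ideal.span {e₁}) := by
      rw [Ideal.isCoprime_span_singleton_iff]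
      exact ⟨1, 1, by rw [one_mul, one_mul, add_comm, hsum]⟩
    have hinf : Ideal.span {e₂} ⊓ Ideal.span {e₁} = ⊥ := by
      refine le_antisymm ?_ bot_le
      rintro x ⟨hx₂, hx₁⟩
      obtain ⟨c, hc⟩ := Ideal.mem_span_singleton'.mp hx₂
      obtain ⟨d, hd⟩ := Ideal.mem_span_singleton'.mp hx₁
      have hx : x = x * e₁ + x * e₂ := by rw [← mul_add, hsum, mul_one]
      have h1 : x * e₁ = 0 := by rw [← hc, mul_assoc, mul_comm e₂ e₁, hprod, mul_zero]
      have h2 : x * e₂ = 0 := by rw [← hd, mul_assoc, hprod, mul_zero]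
      rw [Ideal.mem_bot, hx, h1, h2, add_zero]
    exact ⟨(RingEquiv.quotientBot C).symm.trans
      ((Ideal.quotEquivOfEq hinf.symm).trans
        (Ideal.quotientInfEquivQuotientProd _ _ hcopI))⟩
  · -- localization
    have hloc : IsLocalization.AtPrime (C ⧸ Ideal.span {e₁}) q := by
      constructor
      constructor
      · rintro ⟨s, hs⟩
        by_contra hnotunit
        obtain ⟨m, hm, hsm⟩ := exists_max_ideal_of_mem_nonunits hnotunit
        haveI := hm.isPrime
        have hp : (m.comap (Ideal.Quotient.mk (Ideal.span {e₁}))).IsPrime :=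
          Ideal.IsPrime.comap _
        have he₁m : e₁ ∈ m.comap (Ideal.Quotient.mk (Ideal.span {e₁})) := by
          show Ideal.Quotient.mk _ e₁ ∈ m
          rw [Ideal.Quotient.eq_zero_iff_mem.mpr (Ideal.mem_span_singleton_self e₁)]
          exact m.zero_mem
        have := hkey _ hp he₁m
        exact hs (this ▸ hsm)
      · intro z
        obtain ⟨x, hx⟩ := Ideal.Quotient.mk_surjective z
        exact ⟨(x, 1), by simpa using hx.symm⟩
      · intro x y h
        have : x - y ∈ Ideal.span {e₁} := Ideal.Quotient.eq.mp h
        obtain ⟨c, hc⟩ := Ideal.mem_span_singleton'.mp this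
        refine ⟨⟨e₂, he₂q⟩, ?_⟩
        have : e₂ * (x - y) = 0 := by
          rw [← hc, mul_comm c e₁, ← mul_assoc, mul_comm e₂ e₁, hprod, zero_mul]
        simpa [mul_sub, sub_eq_zero] using this
    exact ⟨(IsLocalization.algEquiv q.primeCompl (C ⧸ Ideal.span {e₁})
      (Localization.AtPrime q)).toRingEquiv⟩
end
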